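/- arXiv:2310.03736 — 2 statements merged into one kernel-verified Lean document; each statement's English description precedes it below -/
import Mathlib

section
/- In any orientation of the colors of the colorful graph of an approval profile, if there exists a directed cycle, then there exists a directed cycle of length exactly three; i.e., an orientation is acyclic if and only if it induces no directed triangle. -/
/-- Voter `v` strictly prefers candidate `a` to `b`: approves `a` but not `b`. -/
def Pref {m n : ℕ} (P : Fin m → Fin n → Bool) (v : Fin n) (a b : Fin m) : Prop :=
  P a v = true ∧ P b v = false

/-- The set of NB constraints induced by an approval profile. -/
def CP {m n : ℕ} (P : Fin m → Fin n → Bool) : Set (Fin n × Fin n × Fin n) :=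
  {t | ∃ a b, Pref P t.1 a b ∧ Pref P t.2.1 b a ∧ Pref P t.2.2 a b}

/-- Adjacency in the formula graph of the induced NB constraints. -/
def FGAdj {m n : ℕ} (P : Fin m → Fin n → Bool) (u v : Fin n × Fin n) : Prop :=
  ∃ t ∈ CP P, (u = (t.1, t.2.1) ∧ v = (t.2.2, t.2.1)) ∨
              (u = (t.2.1, t.1) ∧ v = (t.2.1, t.2.2))

/-- Two ordered pairs lie in the same connected component of the formula graph
(i.e. bear the same color, with consistent base orientation). -/
def SameComp {m n : ℕ} (P : Fin m → Fin n → Bool) (u v : Fin n × Fin n) : Prop :=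
  Relation.EqvGen (FGAdj P) u v

/-- The directed pair `u` is an edge of the colorful graph (in its base orientation):
its connected component in the formula graph is not a singleton. -/
def ColoredPair {m n : ℕ} (P : Fin m → Fin n → Bool) (u : Fin n × Fin n) : Prop :=
  ∃ w, w ≠ u ∧ SameComp P u w

/-- The two edges bear the same color of the colorful graph (possibly with opposite
base orientations). -/
def SameColor {m n : ℕ} (P : Fin m → Fin n → Bool) (u v : Fin n × Fin n) : Prop :=
  SameComp P u v ∨ SameComp P u (v.2, v.1)

/-- The formula graph admits a complementary pairs partition: no component contains a
pair of complementary vertices. -/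
def Valid {m n : ℕ} (P : Fin m → Fin n → Bool) : Prop :=
  ∀ u : Fin n × Fin n, u.1 ≠ u.2 → ¬ SameComp P u (u.2, u.1)

/-- `O` is an orientation of the colors of the colorful graph: it consists of the
colorful-graph edges, each color is flipped as a whole or not at all, and each edge
appears in exactly one direction. -/
def IsOrient {m n : ℕ} (P : Fin m → Fin n → Bool) (O : Set (Fin n × Fin n)) : Prop :=
  (∀ u ∈ O, ColoredPair P u ∨ ColoredPair P (u.2, u.1)) ∧
  (∀ u v, SameComp P u v → (u ∈ O ↔ v ∈ O)) ∧
  (∀ a b : Fin n, ¬ ((a, b) ∈ O ∧ (b, a) ∈ O)) ∧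
  (∀ a b : Fin n, ColoredPair P (a, b) → (a, b) ∈ O ∨ (b, a) ∈ O)

/-! Orientations are asymmetric, so it suffices that every directed path `d → a → b → c` has a
chord `ac` or `db`: either orientation of such a chord yields a directed triangle or a shorter
closed walk. The edge `ab` is colored, so some pair of candidates `x, y` splits `a` (approving `x`)
from `b` (approving `y`) and has a third supporter `r`. Without chords, the corner `a → b → c`
rules out that `r` prefers `x`: then `(a, b)` and `(c, b)` would share a color, which the
orientation forbids, or `ac` would be an edge. The corner `d → a → b` rules out `r` preferring `y`
in the same way. -/

section Triangle

variable {α : Type*} {R : α → α → Prop}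

theorem exists_triangle_of_isChain (hasymm : ∀ a b, R a b → ¬ R b a)
    (hchord : ∀ d a b c, R d a → R a b → R b c → R a c ∨ R c a ∨ R d b ∨ R b d) :
    ∀ (a : α) (l : List α), (a :: l).IsChain R → R ((a :: l).getLast (List.cons_ne_nil a l)) a →
      ∃ x y z, R x y ∧ R y z ∧ R z x
  | a, [], _, haa => (hasymm a a haa haa).elim
  | a, [v], hav, hva => (hasymm a v (List.isChain_pair.mp hav) hva).elim
  | a, v :: w :: l, hchain, hba => by
    obtain ⟨hav, hvw, hwl⟩ : R a v ∧ R v w ∧ (w :: l).IsChain R := by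
      simp_all only [List.isChain_cons_cons, and_self]
    rw [List.getLast_cons_cons, List.getLast_cons_cons] at hba
    rcases hchord _ a v w hba hav hvw with haw | hwa | hbv | hvb
    · exact exists_triangle_of_isChain hasymm hchord a (w :: l) (hwl.cons_cons haw) hba
    · exact ⟨a, v, w, hav, hvw, hwa⟩
    · exact exists_triangle_of_isChain hasymm hchord v (w :: l) (hwl.cons_cons hvw) hbv
    · exact ⟨_, a, v, hba, hav, hvb⟩

theorem exists_triangle_of_transGen (hasymm : ∀ a b, R a b → ¬ R b a)
    (hchord : ∀ d a b c, R d a → R a b → R b c → R a c ∨ R c a ∨ R d b ∨ R b d)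
    {a : α} (h : Relation.TransGen R a a) : ∃ x y z, R x y ∧ R y z ∧ R z x := by
  obtain ⟨b, hab, hba⟩ := Relation.TransGen.tail'_iff.mp h
  obtain ⟨l, hl, rfl⟩ := List.exists_isChain_cons_of_relationReflTransGen hab
  exact exists_triangle_of_isChain hasymm hchord a l hl hba

end Triangle

theorem exists_symmGen_of_eqvGen_of_ne {α : Type*} {r : α → α → Prop} {u w : α}
    (h : Relation.EqvGen r u w) (hne : w ≠ u) : ∃ z ≠ u, Relation.SymmGen r u z := by
  rw [← Relation.EqvGen.reflTransGen_symmGen] at h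
  induction h with
  | refl => exact absurd rfl hne
  | @tail b c _ hbc ih =>
    by_cases hb : b = u
    · exact ⟨c, hne, hb ▸ hbc⟩
    · exact ih hb

def ColorfulAdj {m n : ℕ} (P : Fin m → Fin n → Bool) (a b : Fin n) : Prop :=
  ColoredPair P (a, b) ∨ ColoredPair P (b, a)

section Profile

variable {m n : ℕ} {P : Fin m → Fin n → Bool}

theorem ne_of_pref_of_pref {p q : Fin n} {a b : Fin m} (hp : Pref P p a b) (hq : Pref P q b a) :
    p ≠ q := by
  rintro rfl
  exact Bool.noConfusion (hp.1.symm.trans hq.2)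

theorem fgAdj_symm {u v : Fin n × Fin n} (h : FGAdj P u v) : FGAdj P v u := by
  obtain ⟨⟨p, q, r⟩, ⟨a, b, hp, hq, hr⟩, huv⟩ := h
  exact ⟨(r, q, p), ⟨a, b, hr, hq, hp⟩, huv.imp And.symm And.symm⟩

theorem sameComp_of_pref {p q r : Fin n} {a b : Fin m}
    (hp : Pref P p a b) (hq : Pref P q b a) (hr : Pref P r a b) : SameComp P (p, q) (r, q) :=
  .rel _ _ ⟨(p, q, r), ⟨a, b, hp, hq, hr⟩, .inl ⟨rfl, rfl⟩⟩

theorem coloredPair_of_pref {p q r : Fin n} {a b : Fin m}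
    (hp : Pref P p a b) (hq : Pref P q b a) (hr : Pref P r a b) (hrp : r ≠ p) :
    ColoredPair P (p, q) :=
  ⟨(r, q), fun h => hrp (congrArg Prod.fst h), sameComp_of_pref hp hq hr⟩

theorem exists_pref_of_coloredPair {p q : Fin n} (h : ColoredPair P (p, q)) :
    ∃ a b, Pref P p a b ∧ Pref P q b a ∧
      ∃ r, (Pref P r a b ∧ r ≠ p) ∨ (Pref P r b a ∧ r ≠ q) := by
  obtain ⟨w, hw, hpw⟩ := h
  obtain ⟨z, hz, hpz⟩ := exists_symmGen_of_eqvGen_of_ne hpw hw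
  obtain ⟨⟨t₁, t₂, t₃⟩, ⟨a, b, h₁, h₂, h₃⟩, ⟨hpq, rfl⟩ | ⟨hpq, rfl⟩⟩ :=
    hpz.elim id fgAdj_symm
  · obtain ⟨rfl, rfl⟩ := Prod.mk.inj hpq
    exact ⟨a, b, h₁, h₂, t₃, .inl ⟨h₃, fun h => hz (by rw [h])⟩⟩
  · obtain ⟨rfl, rfl⟩ := Prod.mk.inj hpq
    exact ⟨b, a, h₂, h₁, t₃, .inr ⟨h₃, fun h => hz (by rw [h])⟩⟩

theorem exists_pref_of_colorfulAdj {p q : Fin n} (h : ColorfulAdj P p q) :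
    ∃ a b, Pref P p a b ∧ Pref P q b a ∧
      ∃ r, (Pref P r a b ∧ r ≠ p) ∨ (Pref P r b a ∧ r ≠ q) := by
  rcases h with h | h
  · exact exists_pref_of_coloredPair h
  · obtain ⟨a, b, hq, hp, r, hr⟩ := exists_pref_of_coloredPair h
    exact ⟨b, a, hp, hq, r, hr.symm⟩

theorem eq_of_pref_of_corner {A B C r : Fin n} {x y z w : Fin m}
    (hABC : ¬ SameComp P (A, B) (C, B)) (hAC : ¬ ColorfulAdj P A C)
    (hA : Pref P A x y) (hBA : Pref P B y x) (hBC : Pref P B z w) (hC : Pref P C w z)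
    (hr : Pref P r x y) : r = A := by
  by_contra hrA
  have hrB : SameComp P (A, B) (r, B) := sameComp_of_pref hA hBA hr
  have hCxy : P x C = P y C := by
    cases hx : P x C <;> cases hy : P y C
    · rfl
    · exact absurd (.inr (coloredPair_of_pref ⟨hy, hx⟩ hA hBA (ne_of_pref_of_pref hBC hC))) hAC
    · exact absurd (sameComp_of_pref hA hBA ⟨hx, hy⟩) hABC
    · rfl
  have hAzw : P z A = P w A := by
    cases hz : P z A <;> cases hw : P w A
    · rfl
    · exact absurd (sameComp_of_pref ⟨hw, hz⟩ hBC hC) hABC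
    · exact absurd (.inl (coloredPair_of_pref ⟨hz, hw⟩ hC hBC (ne_of_pref_of_pref hBA hA))) hAC
    · rfl
  cases hx : P x C <;> cases hz : P z A <;> rw [hx] at hCxy <;> rw [hz] at hAzw
  · -- `x, w` is a conflict between `A` and `C`
    cases hw : P w r
    · exact hAC (.inl (coloredPair_of_pref ⟨hA.1, hAzw.symm⟩ ⟨hC.1, hx⟩ ⟨hr.1, hw⟩ hrA))
    · exact hABC (hrB.trans _ _ _ (.symm _ _
        (sameComp_of_pref ⟨hC.1, hCxy.symm⟩ ⟨hBA.1, hBC.2⟩ ⟨hw, hr.2⟩)))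
  · exact hABC (sameComp_of_pref ⟨hAzw.symm, hA.2⟩ ⟨hBA.1, hBC.2⟩ ⟨hC.1, hCxy.symm⟩)
  · exact hABC (sameComp_of_pref ⟨hA.1, hz⟩ ⟨hBC.1, hBA.2⟩ ⟨hx, hC.2⟩)
  · -- `z, y` is a conflict between `A` and `C`
    cases hz' : P z r
    · exact hABC (hrB.trans _ _ _ (.symm _ _
        (sameComp_of_pref ⟨hx, hC.2⟩ ⟨hBC.1, hBA.2⟩ ⟨hr.1, hz'⟩)))
    · exact hAC (.inl (coloredPair_of_pref ⟨hz, hA.2⟩ ⟨hCxy.symm, hC.2⟩ ⟨hz', hr.2⟩ hrA))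

end Profile

namespace IsOrient

variable {m n : ℕ} {P : Fin m → Fin n → Bool} {O : Set (Fin n × Fin n)}

theorem asymm (hO : IsOrient P O) (a b : Fin n) (hab : (a, b) ∈ O) : (b, a) ∉ O :=
  fun hba => hO.2.2.1 a b ⟨hab, hba⟩

theorem mem_or_mem_of_colorfulAdj (hO : IsOrient P O) {a b : Fin n} (h : ColorfulAdj P a b) :
    (a, b) ∈ O ∨ (b, a) ∈ O :=
  h.elim (hO.2.2.2 a b) fun h => (hO.2.2.2 b a h).symm

theorem not_sameComp (hO : IsOrient P O) {a b c : Fin n} (hab : (a, b) ∈ O) (hbc : (b, c) ∈ O) :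
    ¬ SameComp P (a, b) (c, b) :=
  fun h => hO.asymm b c hbc ((hO.2.1 _ _ h).mp hab)

theorem chord (hO : IsOrient P O) {d a b c : Fin n}
    (hda : (d, a) ∈ O) (hab : (a, b) ∈ O) (hbc : (b, c) ∈ O) :
    (a, c) ∈ O ∨ (c, a) ∈ O ∨ (d, b) ∈ O ∨ (b, d) ∈ O := by
  by_contra! hnot
  have hac : ¬ ColorfulAdj P a c := fun h =>
    (hO.mem_or_mem_of_colorfulAdj h).elim hnot.1 hnot.2.1
  have hbd : ¬ ColorfulAdj P b d := fun h =>
    (hO.mem_or_mem_of_colorfulAdj h).elim hnot.2.2.2 hnot.2.2.1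
  obtain ⟨x, y, hax, hby, r, hr⟩ := exists_pref_of_colorfulAdj (hO.1 _ hab)
  obtain ⟨_, _, hbz, hcw, -⟩ := exists_pref_of_colorfulAdj (hO.1 _ hbc)
  obtain ⟨_, _, hdu, hav, -⟩ := exists_pref_of_colorfulAdj (hO.1 _ hda)
  rcases hr with ⟨hr, hra⟩ | ⟨hr, hrb⟩
  · exact hra (eq_of_pref_of_corner (hO.not_sameComp hab hbc) hac hax hby hbz hcw hr)
  · exact hrb (eq_of_pref_of_corner (fun h => hO.not_sameComp hda hab (.symm _ _ h)) hbd
      hby hax hav hdu hr)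

end IsOrient

theorem stmt11_general {m n : ℕ} (P : Fin m → Fin n → Bool)
    (O : Set (Fin n × Fin n)) (hO : IsOrient P O) :
    (∀ a : Fin n, ¬ Relation.TransGen (fun x y => (x, y) ∈ O) a a) ↔
    ¬ ∃ a b c : Fin n, (a, b) ∈ O ∧ (b, c) ∈ O ∧ (c, a) ∈ O := by
  refine ⟨fun hacyclic ⟨a, b, c, hab, hbc, hca⟩ => hacyclic a (.tail (.tail (.single hab) hbc) hca),
    fun htriangle a hcycle => htriangle ?_⟩
  exact exists_triangle_of_transGen hO.asymm (fun _ _ _ _ => hO.chord) hcycle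

/-- assuming each individual color class is acyclic, an orientation of the
colors of the colorful graph is acyclic iff it induces no directed cycle of length three. -/
theorem stmt11 {m n : ℕ} (P : Fin m → Fin n → Bool)
    (hvalid : Valid P)
    (hmono : ∀ (u : Fin n × Fin n) (a : Fin n),
      ¬ Relation.TransGen (fun x y => x ≠ y ∧ SameComp P (x, y) u) a a)
    (O : Set (Fin n × Fin n)) (hO : IsOrient P O) :
    (∀ a : Fin n, ¬ Relation.TransGen (fun x y => (x, y) ∈ O) a a) ↔
    ¬ ∃ a b c : Fin n, (a, b) ∈ O ∧ (b, c) ∈ O ∧ (c, a) ∈ O :=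
  stmt11_general P O hO
end

section
/- If voters 1, 2, 3 are such that edges (1,2) and (2,3) exist in the colorful graph of an approval profile with distinct colors, and the edge between 1 and 3 does not exist in the colorful graph, then there exists a voter set S with 2 ∈ S and 1, 3 ∉ S such that the connected components of (1,2) and (2,3) in the formula graph are exactly {1} × S and S × {3} respectively (so both colors are star bicliques). -/
section NotBetween

variable {α : Type*} {A C X Y Z : Set α}

def NotBetween (X Y Z : Set α) : Prop :=
  (∃ p ∈ X, p ∈ Z ∧ p ∉ Y) ∧ ∃ q ∈ Y, q ∉ X ∧ q ∉ Z

theorem NotBetween.incomp (h : NotBetween X Y Z) : ¬ X ⊆ Y ∧ ¬ Y ⊆ X := by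
  obtain ⟨⟨p, hpX, -, hpY⟩, q, hqY, hqX, -⟩ := h
  exact ⟨fun hXY => hpY (hXY hpX), fun hYX => hqX (hYX hqY)⟩

theorem NotBetween.replace_mid (h : NotBetween Y A Z) (hYC : ¬ Y ⊆ C) (hCY : ¬ C ⊆ Y)
    (hYAC : ¬ NotBetween Y A C) (hZAC : ¬ NotBetween Z A C) (hAYC : ¬ NotBetween A Y C) :
    NotBetween Y C Z := by
  obtain ⟨⟨p, hpY, hpZ, hpA⟩, q, hqA, hqY, hqZ⟩ := h
  obtain ⟨r, hrY, hrC⟩ := Set.not_subset.1 hYC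
  obtain ⟨s, hsC, hsY⟩ := Set.not_subset.1 hCY
  by_cases hqC : q ∈ C
  · refine ⟨?_, q, hqC, hqY, hqZ⟩
    by_cases hpC : p ∈ C
    · by_cases hrZ : r ∈ Z
      · exact ⟨r, hrY, hrZ, hrC⟩
      by_cases hrA : r ∈ A
      · exact absurd ⟨⟨p, hpZ, hpC, hpA⟩, r, hrA, hrZ, hrC⟩ hZAC
      · exact absurd ⟨⟨q, hqA, hqC, hqY⟩, r, hrY, hrA, hrC⟩ hAYC
    · exact ⟨p, hpY, hpZ, hpC⟩
  · have hpC : p ∉ C := fun hpC => hYAC ⟨⟨p, hpY, hpC, hpA⟩, q, hqA, hqY, hqC⟩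
    refine ⟨⟨p, hpY, hpZ, hpC⟩, s, hsC, hsY, fun hsZ => ?_⟩
    by_cases hsA : s ∈ A
    · exact hAYC ⟨⟨s, hsA, hsC, hsY⟩, p, hpY, hpA, hpC⟩
    · exact hZAC ⟨⟨s, hsZ, hsC, hsA⟩, q, hqA, hqZ, hqC⟩

theorem NotBetween.false_of_incomp (h : NotBetween A Y Z) (hYC : ¬ Y ⊆ C) (hCY : ¬ C ⊆ Y)
    (hACZ : ¬ NotBetween A C Z) (hAYC : ¬ NotBetween A Y C) (hZYC : ¬ NotBetween Z Y C) :
    False := by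
  obtain ⟨⟨p, hpA, hpZ, hpY⟩, q, hqY, hqA, hqZ⟩ := h
  obtain ⟨r, hrY, hrC⟩ := Set.not_subset.1 hYC
  obtain ⟨s, hsC, hsY⟩ := Set.not_subset.1 hCY
  by_cases hqC : q ∈ C
  · by_cases hpC : p ∈ C
    · by_cases hrZ : r ∈ Z
      · by_cases hrA : r ∈ A
        · exact hACZ ⟨⟨r, hrA, hrZ, hrC⟩, q, hqC, hqA, hqZ⟩
        · exact hAYC ⟨⟨p, hpA, hpC, hpY⟩, r, hrY, hrA, hrC⟩
      · exact hZYC ⟨⟨p, hpZ, hpC, hpY⟩, r, hrY, hrZ, hrC⟩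
    · exact hACZ ⟨⟨p, hpA, hpZ, hpC⟩, q, hqC, hqA, hqZ⟩
  · have hpC : p ∉ C := fun hpC => hAYC ⟨⟨p, hpA, hpC, hpY⟩, q, hqY, hqA, hqC⟩
    have hsA : s ∉ A := fun hsA => hAYC ⟨⟨s, hsA, hsC, hsY⟩, q, hqY, hqA, hqC⟩
    by_cases hsZ : s ∈ Z
    · exact hZYC ⟨⟨s, hsZ, hsC, hsY⟩, q, hqY, hqZ, hqC⟩
    · exact hACZ ⟨⟨p, hpA, hpZ, hpC⟩, s, hsC, hsA, hsZ⟩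

end NotBetween

section FormulaGraph

variable {m n : ℕ} {P : Fin m → Fin n → Bool} {u v w : Fin n × Fin n} {x y z : Fin n}

def ballot (P : Fin m → Fin n → Bool) (v : Fin n) : Set (Fin m) := {p | P p v}

theorem mem_CP_iff : (x, y, z) ∈ CP P ↔ NotBetween (ballot P x) (ballot P y) (ballot P z) := by
  simp only [CP, Pref, NotBetween, ballot, Set.mem_ofPred_eq, Bool.not_eq_true]
  constructor
  · rintro ⟨p, q, ⟨hpx, hqx⟩, ⟨hqy, hpy⟩, hpz, hqz⟩
    exact ⟨⟨p, hpx, hpz, hpy⟩, q, hqy, hqx, hqz⟩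
  · rintro ⟨⟨p, hpx, hpz, hpy⟩, q, hqy, hqx, hqz⟩
    exact ⟨p, q, ⟨hpx, hqx⟩, ⟨hqy, hpy⟩, hpz, hqz⟩

theorem mem_CP_reverse (h : (x, y, z) ∈ CP P) : (z, y, x) ∈ CP P := by
  obtain ⟨p, q, hx, hy, hz⟩ := h
  exact ⟨p, q, hz, hy, hx⟩

theorem FGAdj.of_mem_CP_fst (h : (x, y, z) ∈ CP P) : FGAdj P (x, y) (z, y) :=
  ⟨_, h, .inl ⟨rfl, rfl⟩⟩

theorem FGAdj.of_mem_CP_snd (h : (x, y, z) ∈ CP P) : FGAdj P (y, x) (y, z) :=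
  ⟨_, h, .inr ⟨rfl, rfl⟩⟩

theorem FGAdj.symm (h : FGAdj P u v) : FGAdj P v u := by
  obtain ⟨_, ht, ⟨rfl, rfl⟩ | ⟨rfl, rfl⟩⟩ := h
  · exact .of_mem_CP_fst (mem_CP_reverse ht)
  · exact .of_mem_CP_snd (mem_CP_reverse ht)

theorem FGAdj.swap (h : FGAdj P u v) : FGAdj P u.swap v.swap := by
  obtain ⟨_, ht, ⟨rfl, rfl⟩ | ⟨rfl, rfl⟩⟩ := h
  · exact .of_mem_CP_snd ht
  · exact .of_mem_CP_fst ht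

theorem FGAdj.incomp (h : FGAdj P u v) :
    ¬ ballot P u.1 ⊆ ballot P u.2 ∧ ¬ ballot P u.2 ⊆ ballot P u.1 := by
  obtain ⟨_, ht, ⟨rfl, rfl⟩ | ⟨rfl, rfl⟩⟩ := h
  · exact (mem_CP_iff.1 ht).incomp
  · exact (mem_CP_iff.1 ht).incomp.symm

theorem SameComp.refl (u : Fin n × Fin n) : SameComp P u u := Relation.EqvGen.refl u

theorem SameComp.symm (h : SameComp P u v) : SameComp P v u := Relation.EqvGen.symm _ _ h

theorem SameComp.trans (h₁ : SameComp P u v) (h₂ : SameComp P v w) : SameComp P u w :=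
  Relation.EqvGen.trans _ _ _ h₁ h₂

theorem SameComp.of_fgAdj (h : FGAdj P u v) : SameComp P u v := Relation.EqvGen.rel _ _ h

theorem SameComp.imp_of_forall_fgAdj {p : Fin n × Fin n → Prop}
    (hp : ∀ u v, FGAdj P u v → p u → p v) (h : SameComp P u v) (hu : p u) : p v :=
  ((InvImage.equivalence _ p ⟨Iff.refl, Iff.symm, Iff.trans⟩).eqvGen_iff.1
    (Relation.EqvGen.mono (fun u v huv => ⟨hp u v huv, hp v u huv.symm⟩) _ _ h)).1 hu

theorem SameComp.swap (h : SameComp P u v) : SameComp P u.swap v.swap :=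
  h.imp_of_forall_fgAdj (p := fun w => SameComp P u.swap w.swap)
    (fun _ _ hxy hx => hx.trans (.of_fgAdj hxy.swap)) (.refl _)

theorem ColoredPair.exists_fgAdj (h : ColoredPair P u) : ∃ v, FGAdj P u v := by
  by_contra! hu
  obtain ⟨w, hwu, huw⟩ := h
  exact hwu (huw.imp_of_forall_fgAdj (p := (· = u)) (fun _ _ h hx => (hu _ (hx ▸ h)).elim) rfl)

theorem ColoredPair.incomp (h : ColoredPair P u) :
    ¬ ballot P u.1 ⊆ ballot P u.2 ∧ ¬ ballot P u.2 ⊆ ballot P u.1 :=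
  h.exists_fgAdj.choose_spec.incomp

theorem ColoredPair.of_sameComp (hu : ColoredPair P u) (h : SameComp P u v) :
    ColoredPair P v := by
  by_cases hvu : v = u
  · exact hvu ▸ hu
  · exact ⟨u, fun huv => hvu huv.symm, h.symm⟩

theorem ColoredPair.swap (h : ColoredPair P u) : ColoredPair P u.swap := by
  obtain ⟨w, hwu, huw⟩ := h
  exact ⟨w.swap, fun h => hwu (Prod.swap_injective h), huw.swap⟩

theorem eq_of_fgAdj_of_not_coloredPair (hu : ¬ ColoredPair P u) (h : FGAdj P u v) : v = u := by
  by_contra hvu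
  exact hu ⟨v, hvu, .of_fgAdj h⟩

end FormulaGraph

section Component

variable {m n : ℕ} {P : Fin m → Fin n → Bool} {a b c y z : Fin n} {u : Fin n × Fin n}

theorem not_mem_CP_of_sameComp (hd : ¬ SameComp P (a, b) (c, b))
    (hy₁ : SameComp P (a, b) (a, y)) (hy₂ : SameComp P (b, c) (y, c)) : (a, y, c) ∉ CP P :=
  fun h => hd ((hy₁.trans (.of_fgAdj (.of_mem_CP_fst h))).trans hy₂.swap.symm)

theorem eq_of_mem_CP_of_sameComp (hbc : ColoredPair P (b, c)) (hd : ¬ SameComp P (a, b) (c, b))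
    (hac : ¬ ColoredPair P (a, c)) (hy₁ : SameComp P (a, b) (a, y))
    (hy₂ : SameComp P (b, c) (y, c)) (h : (a, y, z) ∈ CP P) : z = a := by
  by_contra hza
  have hyc := (hbc.of_sameComp hy₂).incomp
  have hACZ : (a, c, z) ∉ CP P := fun h' =>
    hza (congrArg Prod.fst (eq_of_fgAdj_of_not_coloredPair hac (.of_mem_CP_fst h')))
  have hZYC : (z, y, c) ∉ CP P := fun h' => hd <| SameComp.swap <|
    hy₁.swap.trans <| (SameComp.of_fgAdj (.of_mem_CP_snd h)).trans <|
      (SameComp.of_fgAdj (.of_mem_CP_snd h')).trans hy₂.symm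
  exact (mem_CP_iff.1 h).false_of_incomp hyc.1 hyc.2 (mt mem_CP_iff.2 hACZ)
    (mt mem_CP_iff.2 (not_mem_CP_of_sameComp hd hy₁ hy₂)) (mt mem_CP_iff.2 hZYC)

theorem sameComp_of_mem_CP_of_sameComp (hbc : ColoredPair P (b, c))
    (hd : ¬ SameComp P (a, b) (c, b)) (hac : ¬ ColoredPair P (a, c))
    (hy₁ : SameComp P (a, b) (a, y)) (hy₂ : SameComp P (b, c) (y, c)) (h : (y, a, z) ∈ CP P) :
    SameComp P (b, c) (z, c) := by
  have hyc := (hbc.of_sameComp hy₂).incomp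
  have hWAC : ∀ w, w ≠ c → (w, a, c) ∉ CP P := fun w hwc h' =>
    hwc (congrArg Prod.snd (eq_of_fgAdj_of_not_coloredPair hac (FGAdj.of_mem_CP_snd h').symm))
  have hyc_ne : y ≠ c := fun h' => hyc.1 (h' ▸ subset_rfl)
  have hzc : z ≠ c := fun h' => hWAC y hyc_ne (h' ▸ h)
  have hYCZ := (mem_CP_iff.1 h).replace_mid hyc.1 hyc.2 (mt mem_CP_iff.2 (hWAC y hyc_ne))
    (mt mem_CP_iff.2 (hWAC z hzc)) (mt mem_CP_iff.2 (not_mem_CP_of_sameComp hd hy₁ hy₂))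
  exact hy₂.trans (.of_fgAdj (.of_mem_CP_fst (mem_CP_iff.2 hYCZ)))

theorem fst_eq_and_sameComp_of_sameComp (hbc : ColoredPair P (b, c))
    (hd : ¬ SameComp P (a, b) (c, b)) (hac : ¬ ColoredPair P (a, c))
    (h : SameComp P (a, b) u) : u.1 = a ∧ SameComp P (b, c) (u.2, c) := by
  refine (h.imp_of_forall_fgAdj
    (p := fun u => SameComp P (a, b) u ∧ u.1 = a ∧ SameComp P (b, c) (u.2, c))
    ?_ ⟨.refl _, rfl, .refl _⟩).2
  rintro _ _ ⟨⟨x, y, z⟩, ht, ⟨rfl, rfl⟩ | ⟨rfl, rfl⟩⟩ ⟨hu, rfl, hy⟩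
  · obtain rfl := eq_of_mem_CP_of_sameComp hbc hd hac hu hy ht
    exact ⟨hu.trans (.of_fgAdj (.of_mem_CP_fst ht)), rfl, hy⟩
  · exact ⟨hu.trans (.of_fgAdj (.of_mem_CP_snd ht)), rfl,
      sameComp_of_mem_CP_of_sameComp hbc hd hac hu hy ht⟩

end Component

theorem stmt14_general {m n : ℕ} (P : Fin m → Fin n → Bool)
    (a b c : Fin n)
    (hab : ColoredPair P (a, b)) (hbc : ColoredPair P (b, c))
    (hdiff : ¬ SameColor P (a, b) (b, c))
    (hnoedge : ¬ ColoredPair P (a, c) ∧ ¬ ColoredPair P (c, a)) :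
    ∃ S : Set (Fin n), b ∈ S ∧ a ∉ S ∧ c ∉ S ∧
      {u | SameComp P (a, b) u} = {a} ×ˢ S ∧
      {u | SameComp P (b, c) u} = S ×ˢ {c} := by
  have hd : ¬ SameComp P (a, b) (c, b) := fun h => hdiff (.inr h)
  have hab_star {u} (h : SameComp P (a, b) u) :=
    fst_eq_and_sameComp_of_sameComp hbc hd hnoedge.1 h
  have hcb_star {u} (h : SameComp P (c, b) u) :=
    fst_eq_and_sameComp_of_sameComp hab.swap (fun h => hd h.symm) hnoedge.2 h
  refine ⟨{y | SameComp P (a, b) (a, y)}, .refl _, fun ha => ?_, fun hc => ?_, ?_, ?_⟩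
  · exact hnoedge.1 (hbc.of_sameComp (hab_star ha).2)
  · exact hnoedge.1 (hab.of_sameComp hc)
  · ext ⟨x, y⟩
    simp only [Set.mem_ofPred_eq, Set.mem_prod, Set.mem_singleton_iff]
    refine ⟨fun h => ?_, fun ⟨hx, hy⟩ => hx ▸ hy⟩
    obtain rfl : x = a := (hab_star h).1
    exact ⟨rfl, h⟩
  · ext ⟨x, y⟩
    simp only [Set.mem_ofPred_eq, Set.mem_prod, Set.mem_singleton_iff]
    refine ⟨fun h => ?_, fun ⟨hx, hy⟩ => hy ▸ (hab_star hx).2⟩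
    obtain ⟨rfl, hx⟩ := hcb_star h.swap
    exact ⟨hx.swap, rfl⟩

/-- if edges `(1,2)` and `(2,3)` exist in the colorful graph with distinct
colors and the edge between `1` and `3` does not exist in the colorful graph, then there is
a voter set `S` with `2 ∈ S` and `1, 3 ∉ S` such that the components of `(1,2)` and `(2,3)`
in the formula graph are exactly `{1} × S` and `S × {3}` (star bicliques). -/
theorem stmt14 {m n : ℕ} (P : Fin m → Fin n → Bool) (hvalid : Valid P)
    (a b c : Fin n)
    (hab : ColoredPair P (a, b)) (hbc : ColoredPair P (b, c))
    (hdiff : ¬ SameColor P (a, b) (b, c))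
    (hnoedge : ¬ ColoredPair P (a, c) ∧ ¬ ColoredPair P (c, a)) :
    ∃ S : Set (Fin n), b ∈ S ∧ a ∉ S ∧ c ∉ S ∧
      {u | SameComp P (a, b) u} = {a} ×ˢ S ∧
      {u | SameComp P (b, c) u} = S ×ˢ {c} :=
  stmt14_general P a b c hab hbc hdiff hnoedge
end
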